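/- Let q ∈ ℂ, q ≠ 0, and let a, b, D be elements of a unital ℂ-star-algebra satisfying the U_q(2) relations. Then the elements a′ = a*·D, b′ = −q·b*·D, D′ = D satisfy the U_{1/q}(2) relations: b′a′ = (1/q)·a′b′, a′*b′ = (1/q)·b′a′*, b′b′* = b′*b′, a′a′* + b′b′* = 1, a′*a′ + |1/q|²·b′*b′ = 1, a′D′ = D′a′, b′D′ = ((1/q)²/|1/q|²)·D′b′, and D′D′* = D′*D′ = 1. (This is the algebraic content of the isomorphism U_q(2) ≅ U_{1/q}(2) in the classification theorem.) -/

import Mathlib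

open scoped ComplexConjugate

noncomputable section

/-- The q-Pochhammer symbol `(α; t)_n = Π_{r=0}^{n-1} (1 - α tʳ)`. -/
noncomputable def qPoch (α t : ℂ) (n : ℕ) : ℂ := ∏ r ∈ Finset.range n, (1 - α * t ^ r)

/-- The Gaussian binomial coefficient `binom(n,m)_t = (t;t)_n / ((t;t)_m (t;t)_{n-m})`. -/
noncomputable def qBinom (t : ℂ) (n m : ℕ) : ℂ :=
  qPoch t t n / (qPoch t t m * qPoch t t (n - m))

/-- Elements `a, b, D` of a unital ℂ-star-algebra satisfy the `U_q(2)` relations. -/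
def UqRel (q : ℂ) {A : Type*} [Ring A] [Algebra ℂ A] [StarRing A] (a b D : A) : Prop :=
  b * a = q • (a * b) ∧
  star a * b = q • (b * star a) ∧
  b * star b = star b * b ∧
  a * star a + b * star b = 1 ∧
  star a * a + ((((‖q‖ : ℝ) : ℂ)) ^ 2) • (star b * b) = 1 ∧
  a * D = D * a ∧
  b * D = (q ^ 2 / ((‖q‖ : ℝ) : ℂ) ^ 2) • (D * b) ∧
  D * star D = 1 ∧ star D * D = 1

/-- Conjugation helper: if `x` commutes with `star D` then `x` commutes with `D`. -/
private lemma swap_conj {A : Type*} [Ring A] [StarRing A] {D x : A}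
    (h8 : D * star D = 1) (h9 : star D * D = 1) (hx : x * star D = star D * x) :
    D * x = x * D := by
  calc D * x = D * x * (star D * D) := by rw [h9, mul_one]
    _ = D * (x * star D) * D := by simp only [mul_assoc]
    _ = D * (star D * x) * D := by rw [hx]
    _ = (D * star D) * (x * D) := by simp only [mul_assoc]
    _ = x * D := by rw [h8, one_mul]

/-- Scalar-twisted conjugation helper. -/
private lemma swap_conj_smul {A : Type*} [Ring A] [Algebra ℂ A] [StarRing A] {D x : A} {c : ℂ}
    (h8 : D * star D = 1) (h9 : star D * D = 1) (hx : x * star D = c • (star D * x)) :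
    D * x = c • (x * D) := by
  calc D * x = D * x * (star D * D) := by rw [h9, mul_one]
    _ = D * (x * star D) * D := by simp only [mul_assoc]
    _ = D * (c • (star D * x)) * D := by rw [hx]
    _ = c • ((D * star D) * (x * D)) := by
        simp only [mul_smul_comm, smul_mul_assoc, mul_assoc]
    _ = c • (x * D) := by rw [h8, one_mul]

/-- if `a, b, D` satisfy the `U_q(2)` relations then `a' = a*·D`,
`b' = -q·b*·D`, `D' = D` satisfy the `U_{1/q}(2)` relations. -/
theorem stmt17 {A : Type*} [Ring A] [Algebra ℂ A] [StarRing A] [StarModule ℂ A]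
    (q : ℂ) (hq : q ≠ 0) (a b D : A) (h : UqRel q a b D) :
    UqRel (1 / q) (star a * D) ((-q) • (star b * D)) D := by
  obtain ⟨h1, h2, h3, h4, h5, h6, h7, h8, h9⟩ := h
  have hcq : (conj q) ≠ 0 := by simpa using hq
  have habs : (((‖q‖ : ℝ) : ℂ)) ^ 2 = q * conj q := by
    rw [← Complex.ofReal_pow, Complex.sq_norm, ← Complex.mul_conj]
  have habs' : ((((‖(1/q)‖ : ℝ) : ℂ))) ^ 2 = 1 / (q * conj q) := by
    rw [← habs, norm_div, norm_one, Complex.ofReal_div, Complex.ofReal_one, div_pow, one_pow]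
  -- star of relation 1
  have h1' : star a * star b = conj q • (star b * star a) := by
    simpa [star_mul, star_smul, Complex.star_def] using congrArg star h1
  -- star of relation 2
  have h2' : star b * a = conj q • (a * star b) := by
    simpa [star_mul, star_smul, Complex.star_def] using congrArg star h2
  have h2'' : a * star b = (conj q)⁻¹ • (star b * a) := by
    rw [h2', smul_smul, inv_mul_cancel₀ hcq, one_smul]
  -- star of relation 6 : `star D * star a = star a * star D`
  have e6 : star D * star a = star a * star D := by
    simpa [star_mul] using congrArg star h6
  -- star of relation 7 : `star D * star b = conj (q²/|q|²) • (star b * star D)`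
  have e7 : star D * star b = ((conj q) ^ 2 / (((‖q‖ : ℝ) : ℂ)) ^ 2) • (star b * star D) := by
    have := congrArg star h7
    simpa [star_mul, star_smul, Complex.star_def, map_div₀, map_pow, Complex.conj_ofReal]
      using this
  have inv1 : (q / conj q) * ((conj q) ^ 2 / (((‖q‖ : ℝ) : ℂ)) ^ 2) = 1 := by
    rw [habs]; field_simp
  -- commutations with D
  have hDsa : D * star a = star a * D :=
    swap_conj h8 h9 e6.symm
  have hDsb : D * star b = (q / conj q) • (star b * D) := by
    refine swap_conj_smul h8 h9 ?_
    rw [e7, smul_smul, inv1, one_smul]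
  -- commutations with star D
  have hsDa : star D * a = a * star D := by
    have := swap_conj (D := star D) (x := a)
      (by simpa using h9) (by simpa using h8) (by simpa using h6)
    simpa using this
  have hsDb : star D * b = (q ^ 2 / (((‖q‖ : ℝ) : ℂ)) ^ 2) • (b * star D) := by
    have := swap_conj_smul (D := star D) (x := b)
      (by simpa using h9) (by simpa using h8) (by simpa using h7)
    simpa using this
  -- products of the new generators
  have P1 : (star a * D) * star (star a * D) = star a * a := by
    rw [star_mul, star_star]
    calc star a * D * (star D * a) = star a * ((D * star D) * a) := by simp only [mul_assoc]
      _ = star a * a := by rw [h8, one_mul]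
  have P2 : star (star a * D) * (star a * D) = a * star a := by
    rw [star_mul, star_star]
    calc star D * a * (star a * D) = star D * (a * star a) * D := by simp only [mul_assoc]
      _ = (a * star a) * (star D * D) := by
          rw [← mul_assoc, hsDa]
          calc a * star D * star a * D = a * (star D * star a) * D := by
                simp only [mul_assoc]
            _ = a * (star a * star D) * D := by rw [e6]
            _ = (a * star a) * (star D * D) := by simp only [mul_assoc]
      _ = a * star a := by rw [h9, mul_one]
  have P3 : ((-q) • (star b * D)) * star ((-q) • (star b * D)) = (q * conj q) • (star b * b) := by
    rw [star_smul, star_mul, star_star, Complex.star_def]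
    rw [smul_mul_assoc, mul_smul_comm, smul_smul]
    have : star b * D * (star D * b) = star b * b := by
      calc star b * D * (star D * b) = star b * ((D * star D) * b) := by simp only [mul_assoc]
        _ = star b * b := by rw [h8, one_mul]
    rw [this]
    congr 1
    rw [map_neg]; ring
  have P4 : star ((-q) • (star b * D)) * ((-q) • (star b * D)) = (q * conj q) • (star b * b) := by
    rw [star_smul, star_mul, star_star, Complex.star_def]
    rw [smul_mul_assoc, mul_smul_comm, smul_smul]
    have key : star D * b * (star b * D) = star b * b := by
      calc star D * b * (star b * D)
          = (star D * b) * (star b * D) := rfl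
        _ = ((q ^ 2 / (((‖q‖ : ℝ) : ℂ)) ^ 2) • (b * star D)) * (star b * D) := by rw [hsDb]
        _ = (q ^ 2 / (((‖q‖ : ℝ) : ℂ)) ^ 2) • (b * (star D * star b) * D) := by
            simp only [smul_mul_assoc, mul_assoc]
        _ = (q ^ 2 / (((‖q‖ : ℝ) : ℂ)) ^ 2) •
              (((conj q) ^ 2 / (((‖q‖ : ℝ) : ℂ)) ^ 2) • (b * (star b * star D) * D)) := by
            rw [e7]
            simp only [smul_mul_assoc, mul_smul_comm, mul_assoc]
        _ = ((q ^ 2 / (((‖q‖ : ℝ) : ℂ)) ^ 2) * ((conj q) ^ 2 / (((‖q‖ : ℝ) : ℂ)) ^ 2)) •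
              (b * star b * (star D * D)) := by rw [smul_smul]; simp only [mul_assoc]
        _ = (1 : ℂ) • (b * star b * (star D * D)) := by
            congr 1
            rw [habs]; field_simp
        _ = star b * b := by rw [one_smul, h9, mul_one, h3]
    rw [key]
    congr 1
    rw [map_neg]; ring
  refine ⟨?_, ?_, P3.trans P4.symm, ?_, ?_, ?_, ?_, h8, h9⟩
  · -- b' a' = (1/q) • (a' b')
    have X : (star b * D) * (star a * D) = star b * star a * (D * D) := by
      calc (star b * D) * (star a * D) = star b * (D * star a) * D := by simp only [mul_assoc]
        _ = star b * (star a * D) * D := by rw [hDsa]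
        _ = star b * star a * (D * D) := by simp only [mul_assoc]
    have Y : (star a * D) * (star b * D) = q • (star b * star a * (D * D)) := by
      calc (star a * D) * (star b * D) = star a * (D * star b) * D := by simp only [mul_assoc]
        _ = (q / conj q) • (star a * (star b * D) * D) := by
            rw [hDsb]; simp only [smul_mul_assoc, mul_smul_comm, mul_assoc]
        _ = (q / conj q) • ((star a * star b) * (D * D)) := by simp only [mul_assoc]
        _ = (q / conj q) • (conj q • (star b * star a * (D * D))) := by
            rw [h1']; simp only [smul_mul_assoc]
        _ = q • (star b * star a * (D * D)) := by
            rw [smul_smul]; congr 1; field_simp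
    rw [smul_mul_assoc, mul_smul_comm, X, Y, smul_smul, smul_smul]
    congr 1
    field_simp
  · -- a'* b' = (1/q) • (b' a'*)
    rw [star_mul, star_star]
    have L : (star D * a) * (star b * D) = (q⁻¹ : ℂ) • (star b * a) := by
      calc (star D * a) * (star b * D) = star D * (a * star b) * D := by simp only [mul_assoc]
        _ = star D * ((conj q)⁻¹ • (star b * a)) * D := by rw [h2'']
        _ = (conj q)⁻¹ • ((star D * star b) * (a * D)) := by
            simp only [smul_mul_assoc, mul_smul_comm, mul_assoc]
        _ = (conj q)⁻¹ • (((conj q) ^ 2 / (((‖q‖ : ℝ) : ℂ)) ^ 2) •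
              ((star b * star D) * (D * a))) := by
            rw [e7, h6]
            simp only [smul_mul_assoc, mul_smul_comm, mul_assoc]
        _ = ((conj q)⁻¹ * ((conj q) ^ 2 / (((‖q‖ : ℝ) : ℂ)) ^ 2)) •
              (star b * (star D * D) * a) := by rw [smul_smul]; simp only [mul_assoc]
        _ = ((conj q)⁻¹ * ((conj q) ^ 2 / (((‖q‖ : ℝ) : ℂ)) ^ 2)) • (star b * a) := by
            rw [h9, mul_one]
        _ = (q⁻¹ : ℂ) • (star b * a) := by
            congr 1
            rw [habs]; field_simp
      -- note: final scalar is q⁻¹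
    have R : (star b * D) * (star D * a) = star b * a := by
      calc (star b * D) * (star D * a) = star b * ((D * star D) * a) := by simp only [mul_assoc]
        _ = star b * a := by rw [h8, one_mul]
    rw [mul_smul_comm, smul_mul_assoc, L, R, smul_smul, smul_smul]
    congr 1
    field_simp
  · -- a' a'* + b' b'* = 1
    rw [P1, P3, ← habs]
    exact h5
  · -- a'* a' + |1/q|² • (b'* b') = 1
    rw [P2, P4, smul_smul, habs']
    have : (1 / (q * conj q)) * (q * conj q) = 1 := by field_simp
    rw [this, one_smul, ← h3]
    exact h4
  · -- a' D = D a'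
    calc (star a * D) * D = (D * star a) * D := by rw [hDsa]
      _ = D * (star a * D) := by rw [mul_assoc]
  · -- b' D = ((1/q)²/|1/q|²) • (D b')
    rw [smul_mul_assoc, mul_smul_comm, smul_smul]
    have L : star b * D * D = star b * (D * D) := by rw [mul_assoc]
    have R : D * (star b * D) = (q / conj q) • (star b * (D * D)) := by
      calc D * (star b * D) = (D * star b) * D := by rw [mul_assoc]
        _ = (q / conj q) • (star b * (D * D)) := by
            rw [hDsb]; simp only [smul_mul_assoc, mul_assoc]
    rw [L, R, smul_smul]
    congr 1
    rw [habs']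
    field_simp
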